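/- arXiv:1509.04408 — 2 statements merged into one kernel-verified Lean document; each statement's English description precedes it below -/
import Mathlib

section
/- Let p ≥ 3 be a prime, N_p(u) = #{(m,n) : m ≥ n ≥ 0, p ∤ C(m,n), m + n < u}, and φ_p(q) the count on the anti-diagonal m+n = q. Then for every positive integer u and nonnegative integer k, N_p(p^k u) = (p(p+1)/2)^k · N_p(u) − ((p^k − 1)/2) · ((p+1)/2)^k · φ_p(u − 1). -/
/-- `φ_p(q)`: number of points in Pascal's triangle mod `p` on the anti-diagonal `m + n = q`. -/
noncomputable def phi (p : ℕ) (q : ℤ) : ℕ :=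
  {mn : ℕ × ℕ | mn.2 ≤ mn.1 ∧ (mn.1 : ℤ) + (mn.2 : ℤ) = q ∧ ¬ p ∣ Nat.choose mn.1 mn.2}.ncard

/-- `N_p(u)`: number of `(m,n)` with `m ≥ n ≥ 0`, `p ∤ C(m,n)` and `m + n < u`. -/
noncomputable def Npas (p : ℕ) (u : ℕ) : ℕ :=
  {mn : ℕ × ℕ | mn.2 ≤ mn.1 ∧ mn.1 + mn.2 < u ∧ ¬ p ∣ Nat.choose mn.1 mn.2}.ncard

/-!
By Lucas's theorem, `p ∤ C(m, n)` iff `p ∤ C(m / p, n / p)` and `n % p ≤ m % p`. Splitting off the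
last base-`p` digits therefore identifies the nonzero entries of Pascal's triangle mod `p` with
pairs (nonzero entry `(m', n')`, digit pair `b ≤ a < p`), the anti-diagonal index becoming
`p (m' + n') + (a + b)`. Anti-diagonals below `p u` come from those below `u` with any digit pair,
plus anti-diagonal `u - 1` with digit pairs `a + b < p`; anti-diagonal `p u - 1` comes from
anti-diagonal `u - 1` with digit pairs `a + b = p - 1`. Counting digit pairs (the reflection
`(a, b) ↦ (p - 1 - b, p - 1 - a)` exchanges `a + b ≥ p` with `a + b < p - 1`) turns these into two
linear recursions, whose iteration is the formula.
-/

open Finset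

theorem mul_add_lt_mul_succ_iff {p s t v : ℕ} (ht : t < 2 * p) :
    p * s + t < p * (v + 1) ↔ s < v ∨ s = v ∧ t < p := by
  rw [mul_add_one]
  rcases lt_trichotomy s v with h | rfl | h
  · have := Nat.mul_le_mul_left p (Nat.succ_le_of_lt h)
    rw [Nat.mul_succ] at this
    omega
  · omega
  · have := Nat.mul_le_mul_left p (Nat.succ_le_of_lt h)
    rw [Nat.mul_succ] at this
    omega

theorem mul_add_eq_mul_add_pred_iff {p s t w : ℕ} (ht : t + 1 < 2 * p) :
    p * s + t = p * w + (p - 1) ↔ s = w ∧ t = p - 1 := by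
  rcases lt_trichotomy s w with h | rfl | h
  · have := Nat.mul_le_mul_left p (Nat.succ_le_of_lt h)
    rw [Nat.mul_succ] at this
    omega
  · omega
  · have := Nat.mul_le_mul_left p (Nat.succ_le_of_lt h)
    rw [Nat.mul_succ] at this
    omega

theorem Nat.Prime.dvd_choose_iff_lt {p a b : ℕ} (hp : p.Prime) (ha : a < p) :
    p ∣ a.choose b ↔ a < b := by
  refine ⟨fun h => ?_, fun h => by rw [Nat.choose_eq_zero_of_lt h]; exact dvd_zero p⟩
  by_contra! hba
  have : p ∣ a.factorial := by
    rw [← Nat.choose_mul_factorial_mul_factorial hba, mul_assoc]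
    exact h.mul_right _
  exact absurd (hp.dvd_factorial.mp this) (not_le.mpr ha)

theorem Nat.Prime.not_dvd_choose_iff {p : ℕ} (hp : p.Prime) (m n : ℕ) :
    ¬ p ∣ m.choose n ↔ ¬ p ∣ (m / p).choose (n / p) ∧ n % p ≤ m % p := by
  have : Fact p.Prime := ⟨hp⟩
  rw [(Choose.choose_modEq_choose_mod_mul_choose_div_nat (n := m) (k := n)).dvd_iff dvd_rfl,
    hp.dvd_mul, hp.dvd_choose_iff_lt (Nat.mod_lt m hp.pos), not_or, not_lt, and_comm]

theorem Nat.le_of_not_dvd_choose {p m n : ℕ} (h : ¬ p ∣ m.choose n) : n ≤ m := by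
  contrapose! h
  rw [Nat.choose_eq_zero_of_lt h]
  exact dvd_zero p

def digitPairs (p : ℕ) : Finset (ℕ × ℕ) := (range p ×ˢ range p).filter fun ab => ab.2 ≤ ab.1

section Digits

variable {p : ℕ}

theorem mem_digitPairs {ab : ℕ × ℕ} : ab ∈ digitPairs p ↔ ab.1 < p ∧ ab.2 ≤ ab.1 := by
  simp only [digitPairs, mem_filter, mem_product, mem_range]
  omega

theorem add_add_one_lt_of_mem_digitPairs {ab : ℕ × ℕ} (h : ab ∈ digitPairs p) :
    ab.1 + ab.2 + 1 < 2 * p := by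
  have := mem_digitPairs.mp h
  omega

theorem card_digitPairs : #(digitPairs p) = p * (p + 1) / 2 := by
  have hrow : ∀ a ∈ range p, #((range p).filter (· ≤ a)) = a + 1 := fun a ha => by
    rw [← card_range (a + 1)]
    congr 1
    ext b
    simp only [mem_filter, mem_range] at ha ⊢
    omega
  have hsum : #(digitPairs p) = ∑ i ∈ range (p + 1), i := by
    rw [digitPairs, card_filter, sum_product, sum_range_succ', add_zero]
    refine sum_congr rfl fun a ha => ?_
    rw [← card_filter, hrow a ha]
  rw [hsum, sum_range_id, Nat.add_sub_cancel, mul_comm]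

theorem card_digitPairs_filter_add_eq_pred (hp : 0 < p) :
    #((digitPairs p).filter fun ab => ab.1 + ab.2 = p - 1) = (p + 1) / 2 := by
  rw [show (p + 1) / 2 = #(Icc (p / 2) (p - 1)) by rw [Nat.card_Icc]; omega]
  refine card_nbij' Prod.fst (fun a => (a, p - 1 - a)) ?_ ?_ ?_ ?_
  all_goals intro
  all_goals simp only [coe_filter, coe_Icc, Set.mem_ofPred_eq, Set.mem_Icc, mem_digitPairs,
    Prod.ext_iff]
  all_goals grind

theorem two_mul_card_digitPairs_filter_add_lt :
    2 * #((digitPairs p).filter fun ab => ab.1 + ab.2 < p) =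
      #(digitPairs p) + #((digitPairs p).filter fun ab => ab.1 + ab.2 = p - 1) := by
  set D := digitPairs p
  have hreflect : #(D.filter fun ab => ¬ ab.1 + ab.2 < p) =
      #(D.filter fun ab => ab.1 + ab.2 + 1 < p) := by
    refine card_nbij' (fun ab => (p - 1 - ab.2, p - 1 - ab.1))
      (fun ab => (p - 1 - ab.2, p - 1 - ab.1)) ?_ ?_ ?_ ?_
    all_goals intro
    all_goals simp only [D, coe_filter, Set.mem_ofPred_eq, mem_digitPairs, Prod.ext_iff]
    all_goals omega
  have hlow : #((D.filter fun ab => ab.1 + ab.2 < p).filter fun ab => ab.1 + ab.2 + 1 < p) =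
      #(D.filter fun ab => ab.1 + ab.2 + 1 < p) := by
    rw [filter_filter]
    congr 1
    exact filter_congr fun _ _ => by omega
  have hedge : #((D.filter fun ab => ab.1 + ab.2 < p).filter fun ab => ¬ ab.1 + ab.2 + 1 < p) =
      #(D.filter fun ab => ab.1 + ab.2 = p - 1) := by
    rw [filter_filter]
    congr 1
    exact filter_congr fun ab hab => by have := mem_digitPairs.mp hab; omega
  have := card_filter_add_card_filter_not (s := D) (fun ab => ab.1 + ab.2 < p)
  have := card_filter_add_card_filter_not (s := D.filter fun ab => ab.1 + ab.2 < p)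
    (fun ab => ab.1 + ab.2 + 1 < p)
  omega

end Digits

def pascalSet (p : ℕ) (Q : ℕ → Prop) : Set (ℕ × ℕ) :=
  {mn | ¬ p ∣ mn.1.choose mn.2 ∧ Q (mn.1 + mn.2)}

section PascalSet

variable {p : ℕ}

theorem ncard_pascalSet (hp : p.Prime) (Q : ℕ → Prop) :
    (pascalSet p Q).ncard =
      {x : (ℕ × ℕ) × (ℕ × ℕ) | ¬ p ∣ x.1.1.choose x.1.2 ∧ x.2 ∈ digitPairs p ∧
        Q (p * (x.1.1 + x.1.2) + (x.2.1 + x.2.2))}.ncard := by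
  have hp0 := hp.pos
  have join_div_mod : ∀ {m a : ℕ}, a < p → (p * m + a) / p = m ∧ (p * m + a) % p = a :=
    fun ha => ⟨by rw [Nat.mul_add_div hp0, Nat.div_eq_of_lt ha, add_zero],
      by rw [Nat.mul_add_mod, Nat.mod_eq_of_lt ha]⟩
  refine Set.ncard_congr (fun mn _ => ((mn.1 / p, mn.2 / p), (mn.1 % p, mn.2 % p)))
    ?_ ?_ ?_
  · rintro ⟨m, n⟩ ⟨hmn, hQ⟩
    rw [hp.not_dvd_choose_iff] at hmn
    refine ⟨hmn.1, mem_digitPairs.mpr ⟨Nat.mod_lt m hp0, hmn.2⟩, ?_⟩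
    convert hQ using 1
    dsimp only
    linarith [Nat.div_add_mod m p, Nat.div_add_mod n p]
  · rintro ⟨m, n⟩ ⟨m', n'⟩ - - h
    simp only [Prod.mk.injEq] at h
    rw [← Nat.div_add_mod m p, ← Nat.div_add_mod n p, ← Nat.div_add_mod m' p,
      ← Nat.div_add_mod n' p, h.1.1, h.1.2, h.2.1, h.2.2]
  · rintro ⟨⟨m, n⟩, ⟨a, b⟩⟩ ⟨hmn, hab, hQ⟩
    obtain ⟨ha, hba⟩ := mem_digitPairs.mp hab
    obtain ⟨hm, ha'⟩ := join_div_mod (m := m) ha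
    obtain ⟨hn, hb'⟩ := join_div_mod (m := n) (hba.trans_lt ha)
    refine ⟨(p * m + a, p * n + b), ⟨?_, ?_⟩, ?_⟩
    · rw [hp.not_dvd_choose_iff, hm, hn, ha', hb']
      exact ⟨hmn, hba⟩
    · convert hQ using 1
      dsimp only
      ring
    · simp only [hm, hn, ha', hb']

theorem pascalSet_finite {Q : ℕ → Prop} {u : ℕ} (hQ : ∀ s, Q s → s < u) :
    (pascalSet p Q).Finite :=
  ((Set.finite_Iio u).prod (Set.finite_Iio u)).subset fun mn hmn => by
    have := hQ _ hmn.2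
    exact ⟨show mn.1 < u by omega, show mn.2 < u by omega⟩

theorem Npas_eq_ncard (u : ℕ) : Npas p u = (pascalSet p (· < u)).ncard := by
  unfold Npas pascalSet
  congr 1
  ext ⟨m, n⟩
  exact ⟨fun h => ⟨h.2.2, h.2.1⟩, fun h => ⟨Nat.le_of_not_dvd_choose h.1, h.2, h.1⟩⟩

theorem phi_natCast_eq_ncard (q : ℕ) : phi p q = (pascalSet p (· = q)).ncard := by
  unfold phi pascalSet
  congr 1
  ext ⟨m, n⟩
  simp only [Set.mem_ofPred_eq]
  exact ⟨fun h => ⟨h.2.2, by exact_mod_cast h.2.1⟩,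
    fun h => ⟨Nat.le_of_not_dvd_choose h.1, by exact_mod_cast h.2, h.1⟩⟩

theorem phi_of_neg {q : ℤ} (hq : q < 0) : phi p q = 0 := by
  unfold phi
  convert Set.ncard_empty (ℕ × ℕ)
  ext
  simp only [Set.mem_ofPred_eq, Set.mem_empty_iff_false, iff_false]
  omega

theorem Npas_succ (v : ℕ) : Npas p (v + 1) = Npas p v + phi p v := by
  rw [Npas_eq_ncard, Npas_eq_ncard, phi_natCast_eq_ncard, ← Set.ncard_union_eq
    (Set.disjoint_left.mpr fun _ h h' => (ne_of_lt h.2) h'.2)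
    (pascalSet_finite fun _ => id) (pascalSet_finite fun _ h => h.trans_lt v.lt_succ_self)]
  congr 1
  ext mn
  simp only [pascalSet, Set.mem_union, Set.mem_ofPred_eq]
  omega

theorem Npas_mul_succ (hp : p.Prime) (v : ℕ) :
    Npas p (p * (v + 1)) = Npas p v * #(digitPairs p) +
      phi p v * #((digitPairs p).filter fun ab => ab.1 + ab.2 < p) := by
  rw [Npas_eq_ncard, ncard_pascalSet hp, Npas_eq_ncard, phi_natCast_eq_ncard,
    ← Set.ncard_coe_finset, ← Set.ncard_coe_finset, ← Set.ncard_prod, ← Set.ncard_prod,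
    ← Set.ncard_union_eq ?_ ?_ ?_]
  · congr 1
    ext ⟨y, ab⟩
    by_cases hab : ab ∈ digitPairs p
    · have hsum := add_add_one_lt_of_mem_digitPairs hab
      simp only [pascalSet, Set.mem_union, Set.mem_prod, Set.mem_ofPred_eq, coe_filter, mem_coe,
        hab, mul_add_lt_mul_succ_iff (s := y.1 + y.2) (v := v) (by omega : ab.1 + ab.2 < 2 * p),
        true_and, and_true]
      tauto
    · simp [pascalSet, hab]
  · exact Set.disjoint_left.mpr fun _ h h' => (ne_of_lt h.1.2) h'.1.2
  · exact (pascalSet_finite fun _ => id).prod (finite_toSet _)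
  · exact (pascalSet_finite fun _ h => h.trans_lt v.lt_succ_self).prod (finite_toSet _)

theorem phi_mul_add_pred (hp : p.Prime) (w : ℕ) :
    phi p (p * w + (p - 1) : ℕ) =
      phi p w * #((digitPairs p).filter fun ab => ab.1 + ab.2 = p - 1) := by
  rw [phi_natCast_eq_ncard, ncard_pascalSet hp, phi_natCast_eq_ncard, ← Set.ncard_coe_finset,
    ← Set.ncard_prod]
  congr 1
  ext ⟨y, ab⟩
  by_cases hab : ab ∈ digitPairs p
  · simp only [pascalSet, Set.mem_prod, Set.mem_ofPred_eq, coe_filter, hab, true_and,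
      mul_add_eq_mul_add_pred_iff (add_add_one_lt_of_mem_digitPairs hab)]
    tauto
  · simp [pascalSet, hab]

theorem Npas_mul (hp : p.Prime) (u : ℕ) :
    (Npas p (p * u) : ℤ) = #(digitPairs p) * Npas p u -
      (#(digitPairs p) - #((digitPairs p).filter fun ab => ab.1 + ab.2 < p)) *
        phi p ((u : ℤ) - 1) := by
  cases u with
  | zero => simp [Npas, phi_of_neg]
  | succ v =>
    rw [Npas_mul_succ hp, Npas_succ]
    push_cast
    rw [add_sub_cancel_right]
    ring

theorem phi_mul_sub_one (hp : p.Prime) (u : ℕ) :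
    phi p (((p * u : ℕ) : ℤ) - 1) =
      #((digitPairs p).filter fun ab => ab.1 + ab.2 = p - 1) * phi p ((u : ℤ) - 1) := by
  cases u with
  | zero => simp [phi_of_neg]
  | succ w =>
    have hp0 := hp.pos
    rw [show ((p * (w + 1) : ℕ) : ℤ) - 1 = ((p * w + (p - 1) : ℕ) : ℤ) by push_cast [hp0]; ring,
      phi_mul_add_pred hp, Nat.cast_succ, add_sub_cancel_right, mul_comm]

end PascalSet

theorem pow_mul_eq_of_mul_eq {p : ℕ} (hp : Odd p) {N f : ℕ → ℤ} {A B C : ℤ} (hA : A = p * C)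
    (hB : 2 * B = A - C) (hN : ∀ u, N (p * u) = A * N u - B * f u)
    (hf : ∀ u, f (p * u) = C * f u) (u k : ℕ) :
    N (p ^ k * u) = A ^ k * N u - ((p ^ k - 1) / 2) * C ^ k * f u := by
  have hhalf : ∀ k, 2 * (((p : ℤ) ^ k - 1) / 2) = p ^ k - 1 := fun k =>
    Int.mul_ediv_cancel' (hp.natCast.pow.sub_odd odd_one).two_dvd
  have hfpow : ∀ k, f (p ^ k * u) = C ^ k * f u := fun k => by
    induction k with
    | zero => simp
    | succ k ih => rw [pow_succ', mul_assoc, hf, ih, pow_succ', mul_assoc]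
  induction k with
  | zero => simp
  | succ k ih =>
    rw [pow_succ', mul_assoc, hN, ih, hfpow]
    have hcoeff : A * (((p : ℤ) ^ k - 1) / 2) + B = ((p : ℤ) ^ (k + 1) - 1) / 2 * C := by
      refine mul_left_cancel₀ two_ne_zero ?_
      linear_combination A * hhalf k - C * hhalf (k + 1) + hB + p ^ k * hA
    linear_combination (-(C ^ k) * f u) * hcoeff

theorem Npas_pow_mul_general (p : ℕ) (hp : p.Prime) (hp3 : 3 ≤ p) (u : ℕ) (k : ℕ) :
    (Npas p (p ^ k * u) : ℤ) =
      ((p * (p + 1) / 2 : ℕ) : ℤ) ^ k * Npas p u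
        - (((p : ℤ) ^ k - 1) / 2) * (((p + 1) / 2 : ℕ) : ℤ) ^ k * phi p ((u : ℤ) - 1) := by
  have hodd : Odd p := hp.odd_of_ne_two (by omega)
  have hA : (#(digitPairs p) : ℤ) =
      p * #((digitPairs p).filter fun ab => ab.1 + ab.2 = p - 1) := by
    rw [card_digitPairs, card_digitPairs_filter_add_eq_pred hp.pos,
      Nat.mul_div_assoc p (even_iff_two_dvd.mp hodd.add_one), Nat.cast_mul]
  have hB : (2 : ℤ) * (#(digitPairs p) - #((digitPairs p).filter fun ab => ab.1 + ab.2 < p)) =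
      #(digitPairs p) - #((digitPairs p).filter fun ab => ab.1 + ab.2 = p - 1) := by
    have := two_mul_card_digitPairs_filter_add_lt (p := p)
    omega
  have := pow_mul_eq_of_mul_eq hodd (N := fun u => Npas p u)
    (f := fun u => phi p ((u : ℤ) - 1)) hA hB (Npas_mul hp)
    (fun u => by exact_mod_cast phi_mul_sub_one hp u) u k
  rwa [card_digitPairs, card_digitPairs_filter_add_eq_pred hp.pos] at this

theorem Npas_pow_mul (p : ℕ) (hp : p.Prime) (hp3 : 3 ≤ p) (u : ℕ) (hu : 0 < u) (k : ℕ) :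
    (Npas p (p ^ k * u) : ℤ) =
      ((p * (p + 1) / 2 : ℕ) : ℤ) ^ k * Npas p u
        - (((p : ℤ) ^ k - 1) / 2) * (((p + 1) / 2 : ℕ) : ℤ) ^ k * phi p ((u : ℤ) - 1) :=
  Npas_pow_mul_general p hp hp3 u k
end

section
/- With d(u) = M(u)/u^{θ_2} as above, lim_{k→∞} d(2^k) = 2/5 and lim_{k→∞} d(9·2^k) = 64/(5·9^{θ_2}), and these two limits are distinct; hence d(u) does not converge as u → ∞. -/
open Filter

/-- `M(u)`: number of `(m,n)` with `m ≥ n ≥ 0`, `C(m,n)` odd and `m + 2n < u`. -/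
noncomputable def Mfun (u : ℕ) : ℕ :=
  {mn : ℕ × ℕ | mn.2 ≤ mn.1 ∧ mn.1 + 2 * mn.2 < u ∧ ¬ 2 ∣ Nat.choose mn.1 mn.2}.ncard

/-- `θ₂ = log 3 / log 2`. -/
noncomputable def theta2 : ℝ := Real.log 3 / Real.log 2

/-- `d(u) = M(u)/u^{θ₂}`. -/
noncomputable def dfun (u : ℕ) : ℝ := (Mfun u : ℝ) / (u : ℝ) ^ theta2

/-!
Splitting `(m, n)` by parities and applying Lucas' theorem mod 2 gives
`M(u) = M(⌈u/2⌉) + M(⌊u/2⌋) + M(⌊u/2⌋ - 1)`, so doubling `N` acts linearly on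
`(M(N), M(N-1), M(N-2))`, with eigenvalues `3`, `φ` and `-1/φ`. The left `3`-eigenvector gives
the weight `W(N) = 2 M(N) + 2 M(N-1) + M(N-2)` with `W(2N) = 3 W(N)`, while `5 M - W` satisfies the
Fibonacci recurrence along `N * 2^k` and is therefore `O(2^k)`. As `(N 2^k)^θ₂ = N^θ₂ 3^k`, this
gives `d(N 2^k) → W(N) / (5 N^θ₂)`, and `W(1) = 2`, `W(9) = 64`. The two limits differ because
`9^θ₂ = 2^(2 θ₂²)` and `2 θ₂² > 5`, which follows from `θ₂ > 19/12`, i.e. `2^19 < 3^12`.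
-/

def oddChooseSet (u : ℕ) : Set (ℕ × ℕ) :=
  {mn | mn.2 ≤ mn.1 ∧ mn.1 + 2 * mn.2 < u ∧ ¬ 2 ∣ Nat.choose mn.1 mn.2}

theorem Mfun_eq_ncard (u : ℕ) : Mfun u = (oddChooseSet u).ncard := rfl

theorem two_dvd_choose_two_mul_add (a b r s : ℕ) (hr : r < 2) (hs : s < 2) :
    2 ∣ (2 * a + r).choose (2 * b + s) ↔ 2 ∣ r.choose s * a.choose b := by
  rw [(Choose.choose_modEq_choose_mod_mul_choose_div_nat (p := 2)).dvd_iff dvd_rfl,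
    show (2 * a + r) % 2 = r by omega, show (2 * b + s) % 2 = s by omega,
    show (2 * a + r) / 2 = a by omega, show (2 * b + s) / 2 = b by omega]

theorem mk_two_mul_mem_oddChooseSet {u a b : ℕ} :
    (2 * a, 2 * b) ∈ oddChooseSet u ↔ (a, b) ∈ oddChooseSet ((u + 1) / 2) := by
  have := two_dvd_choose_two_mul_add a b 0 0 (by norm_num) (by norm_num)
  simp only [add_zero, Nat.choose_self, one_mul] at this
  simp only [oddChooseSet, Set.mem_ofPred_eq, this]
  omega

theorem mk_two_mul_add_one_mem_oddChooseSet {u a b : ℕ} :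
    (2 * a + 1, 2 * b) ∈ oddChooseSet u ↔ (a, b) ∈ oddChooseSet (u / 2) := by
  have := two_dvd_choose_two_mul_add a b 1 0 (by norm_num) (by norm_num)
  simp only [add_zero, Nat.choose_zero_right, one_mul] at this
  simp only [oddChooseSet, Set.mem_ofPred_eq, this]
  omega

theorem mk_two_mul_add_one_add_one_mem_oddChooseSet {u a b : ℕ} :
    (2 * a + 1, 2 * b + 1) ∈ oddChooseSet u ↔ (a, b) ∈ oddChooseSet (u / 2 - 1) := by
  have := two_dvd_choose_two_mul_add a b 1 1 (by norm_num) (by norm_num)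
  simp only [Nat.choose_self, one_mul] at this
  simp only [oddChooseSet, Set.mem_ofPred_eq, this]
  omega

theorem mk_two_mul_two_mul_add_one_notMem_oddChooseSet {u a b : ℕ} :
    (2 * a, 2 * b + 1) ∉ oddChooseSet u := fun h =>
  h.2.2 ((two_dvd_choose_two_mul_add a b 0 1 (by norm_num) (by norm_num)).mpr (by simp))

theorem oddChooseSet_eq_union (u : ℕ) :
    oddChooseSet u = (fun p => (2 * p.1, 2 * p.2)) '' oddChooseSet ((u + 1) / 2) ∪
      (fun p => (2 * p.1 + 1, 2 * p.2)) '' oddChooseSet (u / 2) ∪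
      (fun p => (2 * p.1 + 1, 2 * p.2 + 1)) '' oddChooseSet (u / 2 - 1) := by
  refine subset_antisymm ?_ ?_
  · rintro ⟨m, n⟩ h
    obtain ⟨a, rfl | rfl⟩ := Nat.even_or_odd' m <;>
      obtain ⟨b, rfl | rfl⟩ := Nat.even_or_odd' n
    · exact .inl (.inl ⟨(a, b), mk_two_mul_mem_oddChooseSet.mp h, rfl⟩)
    · exact absurd h mk_two_mul_two_mul_add_one_notMem_oddChooseSet
    · exact .inl (.inr ⟨(a, b), mk_two_mul_add_one_mem_oddChooseSet.mp h, rfl⟩)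
    · exact .inr ⟨(a, b), mk_two_mul_add_one_add_one_mem_oddChooseSet.mp h, rfl⟩
  · rintro _ ((⟨p, hp, rfl⟩ | ⟨p, hp, rfl⟩) | ⟨p, hp, rfl⟩)
    · exact mk_two_mul_mem_oddChooseSet.mpr hp
    · exact mk_two_mul_add_one_mem_oddChooseSet.mpr hp
    · exact mk_two_mul_add_one_add_one_mem_oddChooseSet.mpr hp

theorem oddChooseSet_finite (u : ℕ) : (oddChooseSet u).Finite :=
  ((Set.finite_Iio u).prod (Set.finite_Iio u)).subset fun _ ⟨_, h, _⟩ =>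
    ⟨Set.mem_Iio.mpr (by omega), Set.mem_Iio.mpr (by omega)⟩

theorem Mfun_eq_add_add (u : ℕ) :
    Mfun u = Mfun ((u + 1) / 2) + Mfun (u / 2) + Mfun (u / 2 - 1) := by
  have hfin := oddChooseSet_finite
  simp only [Mfun_eq_ncard]
  rw [oddChooseSet_eq_union, Set.ncard_union_eq ?disjoint_union
      (((hfin _).image _).union ((hfin _).image _)) ((hfin _).image _),
    Set.ncard_union_eq ?disjoint ((hfin _).image _) ((hfin _).image _),
    Set.ncard_image_of_injective _ ?_, Set.ncard_image_of_injective _ ?_,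
    Set.ncard_image_of_injective _ ?_]
  case disjoint_union =>
    refine Set.disjoint_left.mpr ?_
    rintro _ (⟨p, -, rfl⟩ | ⟨p, -, rfl⟩) ⟨q, -, h⟩ <;>
      simp only [Prod.mk.injEq] at h <;> omega
  case disjoint =>
    refine Set.disjoint_left.mpr ?_
    rintro _ ⟨p, -, rfl⟩ ⟨q, -, h⟩
    simp only [Prod.mk.injEq] at h
    omega
  all_goals
    rintro ⟨a, b⟩ ⟨c, d⟩ h
    simp only [Prod.mk.injEq] at h ⊢
    omega

theorem Mfun_zero : Mfun 0 = 0 := by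
  have := Mfun_eq_add_add 0
  norm_num at this
  omega

theorem Mfun_one : Mfun 1 = 1 := by
  refine Set.ncard_eq_one.mpr ⟨(0, 0), Set.eq_singleton_iff_unique_mem.mpr ⟨by simp, ?_⟩⟩
  rintro ⟨m, n⟩ ⟨-, h, -⟩
  simp only [Prod.mk.injEq]
  omega

theorem Mfun_two_mul (N : ℕ) : Mfun (2 * N) = 2 * Mfun N + Mfun (N - 1) := by
  rw [Mfun_eq_add_add, show (2 * N + 1) / 2 = N by omega, show 2 * N / 2 = N by omega]
  ring

theorem Mfun_two_mul_sub_one (N : ℕ) :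
    Mfun (2 * N - 1) = Mfun N + Mfun (N - 1) + Mfun (N - 2) := by
  rw [Mfun_eq_add_add, show (2 * N - 1 + 1) / 2 = N by omega, show (2 * N - 1) / 2 = N - 1 by omega,
    show N - 1 - 1 = N - 2 by omega]

theorem Mfun_two_mul_sub_two (N : ℕ) : Mfun (2 * N - 2) = 2 * Mfun (N - 1) + Mfun (N - 2) := by
  rw [Mfun_eq_add_add, show (2 * N - 2 + 1) / 2 = N - 1 by omega,
    show (2 * N - 2) / 2 = N - 1 by omega, show N - 1 - 1 = N - 2 by omega]
  ring

noncomputable def Mweight (N : ℕ) : ℕ := 2 * Mfun N + 2 * Mfun (N - 1) + Mfun (N - 2)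

theorem Mweight_two_mul (N : ℕ) : Mweight (2 * N) = 3 * Mweight N := by
  simp only [Mweight, Mfun_two_mul, Mfun_two_mul_sub_one, Mfun_two_mul_sub_two]
  ring

theorem Mweight_mul_two_pow (N k : ℕ) : Mweight (N * 2 ^ k) = Mweight N * 3 ^ k := by
  induction k with
  | zero => simp
  | succ k ih => rw [pow_succ, ← mul_assoc, mul_comm _ 2, Mweight_two_mul, ih]; ring

noncomputable def Merror (N : ℕ) : ℤ := 5 * Mfun N - Mweight N

theorem Merror_two_mul_two_mul (N : ℕ) : Merror (2 * (2 * N)) = Merror (2 * N) + Merror N := by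
  simp only [Merror, Mweight_two_mul, Mfun_two_mul (2 * N), Mfun_two_mul_sub_one, Mfun_two_mul]
  push_cast [Mweight]
  ring

theorem abs_le_mul_two_pow_of_add_two_eq {x : ℕ → ℝ} (hx : ∀ k, x (k + 2) = x (k + 1) + x k)
    (k : ℕ) : |x k| ≤ (|x 0| + |x 1|) * 2 ^ k := by
  induction k using Nat.twoStepInduction with
  | zero => simp
  | one => rw [pow_one]; linarith [abs_nonneg (x 0), abs_nonneg (x 1)]
  | more k ih₀ ih₁ =>
    calc |x (k + 2)| ≤ |x (k + 1)| + |x k| := hx k ▸ abs_add_le _ _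
      _ ≤ (|x 0| + |x 1|) * 2 ^ (k + 1) + (|x 0| + |x 1|) * 2 ^ k := add_le_add ih₁ ih₀
      _ = 3 * ((|x 0| + |x 1|) * 2 ^ k) := by ring
      _ ≤ 4 * ((|x 0| + |x 1|) * 2 ^ k) := by gcongr; norm_num
      _ = (|x 0| + |x 1|) * 2 ^ (k + 2) := by ring

theorem isLittleO_Merror_mul_two_pow (N : ℕ) :
    (fun k => (Merror (N * 2 ^ k) : ℝ)) =o[atTop] fun k => (3 : ℝ) ^ k := by
  set x : ℕ → ℝ := fun k => Merror (N * 2 ^ k)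
  have hrec (k : ℕ) : x (k + 2) = x (k + 1) + x k := by
    dsimp only [x]
    rw [show N * 2 ^ (k + 2) = 2 * (2 * (N * 2 ^ k)) by ring,
      show N * 2 ^ (k + 1) = 2 * (N * 2 ^ k) by ring, Merror_two_mul_two_mul]
    push_cast
    ring
  have hbig : x =O[atTop] fun k => (2 : ℝ) ^ k :=
    Asymptotics.IsBigO.of_bound _ (Eventually.of_forall fun k => by
      simpa [abs_of_nonneg] using abs_le_mul_two_pow_of_add_two_eq hrec k)
  exact hbig.trans_isLittleO (isLittleO_pow_pow_of_lt_left (by norm_num) (by norm_num))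

theorem tendsto_Mfun_mul_two_pow_div_three_pow (N : ℕ) :
    Tendsto (fun k => (Mfun (N * 2 ^ k) : ℝ) / 3 ^ k) atTop (nhds ((Mweight N : ℝ) / 5)) := by
  have hsplit (k : ℕ) : (Mfun (N * 2 ^ k) : ℝ) / 3 ^ k
      = Mweight N / 5 + (Merror (N * 2 ^ k) : ℝ) / 3 ^ k / 5 := by
    simp only [Merror, Mweight_mul_two_pow]
    push_cast
    field_simp
    ring
  simp_rw [hsplit]
  simpa using ((isLittleO_Merror_mul_two_pow N).tendsto_div_nhds_zero.div_const 5).const_add _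

theorem Mweight_one : Mweight 1 = 2 := by
  simp [Mweight, Mfun_one, Mfun_zero]

theorem Mweight_nine : Mweight 9 = 64 := by
  have h2 := Mfun_two_mul 1
  have h3 := Mfun_two_mul_sub_one 2
  have h4 := Mfun_two_mul 2
  have h5 := Mfun_two_mul_sub_one 3
  have h7 := Mfun_two_mul_sub_one 4
  have h8 := Mfun_two_mul 4
  have h9 := Mfun_two_mul_sub_one 5
  norm_num [Mfun_zero, Mfun_one] at h2 h3 h4 h5 h7 h8 h9
  norm_num [Mweight]
  omega

theorem two_rpow_theta2 : (2 : ℝ) ^ theta2 = 3 := by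
  rw [theta2, Real.rpow_def_of_pos two_pos, mul_div_cancel₀ _ (Real.log_pos one_lt_two).ne',
    Real.exp_log three_pos]

theorem natCast_mul_two_pow_rpow_theta2 (N k : ℕ) :
    ((N * 2 ^ k : ℕ) : ℝ) ^ theta2 = N ^ theta2 * 3 ^ k := by
  rw [Nat.cast_mul, Real.mul_rpow (by positivity) (by positivity), Nat.cast_pow,
    Nat.cast_ofNat,
    ← Real.rpow_natCast, ← Real.rpow_mul zero_le_two, mul_comm (k : ℝ), Real.rpow_mul zero_le_two,
    two_rpow_theta2, Real.rpow_natCast]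

theorem tendsto_dfun_mul_two_pow (N : ℕ) :
    Tendsto (fun k => dfun (N * 2 ^ k)) atTop
      (nhds ((Mweight N : ℝ) / 5 / (N : ℝ) ^ theta2)) := by
  simp_rw [dfun, natCast_mul_two_pow_rpow_theta2, mul_comm ((N : ℝ) ^ theta2), ← div_div]
  exact (tendsto_Mfun_mul_two_pow_div_three_pow N).div_const _

theorem nineteen_div_twelve_lt_theta2 : (19 : ℝ) / 12 < theta2 := by
  have h := Real.log_lt_log (by positivity) (by norm_num : (2 : ℝ) ^ 19 < 3 ^ 12)
  rw [Real.log_pow, Real.log_pow] at h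
  rw [theta2, lt_div_iff₀ (Real.log_pos one_lt_two)]
  push_cast at h
  linarith

theorem thirtyTwo_lt_nine_rpow_theta2 : (32 : ℝ) < 9 ^ theta2 := by
  have h9 : (9 : ℝ) ^ theta2 = 2 ^ (2 * theta2 ^ 2) := by
    rw [show (9 : ℝ) = (2 ^ theta2) ^ (2 : ℝ) by rw [two_rpow_theta2]; norm_num,
      ← Real.rpow_mul zero_le_two, ← Real.rpow_mul zero_le_two]
    ring_nf
  have h32 : (32 : ℝ) = 2 ^ (5 : ℝ) := by norm_num
  rw [h9, h32]
  apply Real.rpow_lt_rpow_of_exponent_lt one_lt_two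
  nlinarith [nineteen_div_twelve_lt_theta2]

theorem dfun_not_convergent :
    Tendsto (fun k : ℕ => dfun (2 ^ k)) atTop (nhds (2 / 5)) ∧
    Tendsto (fun k : ℕ => dfun (9 * 2 ^ k)) atTop (nhds (64 / (5 * (9 : ℝ) ^ theta2))) ∧
    (2 : ℝ) / 5 ≠ 64 / (5 * (9 : ℝ) ^ theta2) ∧
    ¬ ∃ L : ℝ, Tendsto (fun u : ℕ => dfun u) atTop (nhds L) := by
  have lim₁ : Tendsto (fun k : ℕ => dfun (2 ^ k)) atTop (nhds (2 / 5)) := by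
    simpa [Mweight_one] using tendsto_dfun_mul_two_pow 1
  have lim₉ : Tendsto (fun k : ℕ => dfun (9 * 2 ^ k)) atTop
      (nhds (64 / (5 * (9 : ℝ) ^ theta2))) := by
    simpa [Mweight_nine, div_div] using tendsto_dfun_mul_two_pow 9
  have hne : (2 : ℝ) / 5 ≠ 64 / (5 * (9 : ℝ) ^ theta2) := by
    refine (div_lt_iff₀ (by positivity) |>.mpr ?_).ne'
    linarith [thirtyTwo_lt_nine_rpow_theta2]
  refine ⟨lim₁, lim₉, hne, fun ⟨L, hL⟩ => hne ?_⟩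
  have h₁ : Tendsto (fun k : ℕ => 2 ^ k) atTop atTop :=
    tendsto_pow_atTop_atTop_of_one_lt one_lt_two
  have h₉ : Tendsto (fun k : ℕ => 9 * 2 ^ k) atTop atTop := h₁.const_mul_atTop' (by norm_num)
  rw [← tendsto_nhds_unique (hL.comp h₁) lim₁, ← tendsto_nhds_unique (hL.comp h₉) lim₉]
end
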